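/- If a random variable S has a density f which is even, bounded, continuous, strictly decreasing on [0,∞), and positive at 1, then E[(1 - S²)/(1 + S²)²] > 0. -/

import Mathlib

/-!
The weight ψ(x) = (1 - x²)/(1 + x²)² is the derivative of x/(1 + x²), which vanishes at ±∞, so
∫ ψ = 0 and hence E[ψ(S)] = ∫ ψ(x) (f(x) - f(1)) dx. Since ψ is positive exactly on (-1, 1), which
is where f exceeds f(1), the last integrand is nonnegative, and it is strictly positive on (-1, 1).
-/

open MeasureTheory Filter Set

theorem integral_mul_pos_of_integral_eq_zero {α : Type*} [MeasurableSpace α] {μ : Measure α}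
    {g f : α → ℝ} (c : ℝ) (hg : Integrable g μ) (hg_zero : ∫ x, g x ∂μ = 0)
    (hgf : Integrable (fun x => g x * f x) μ) (h_nonneg : ∀ x, 0 ≤ g x * (f x - c))
    (h_supp : 0 < μ (Function.support fun x => g x * (f x - c))) :
    0 < ∫ x, g x * f x ∂μ := by
  have hgc : Integrable (fun x => g x * c) μ := hg.mul_const c
  have h_shift : ∫ x, g x * (f x - c) ∂μ = ∫ x, g x * f x ∂μ := by
    simp_rw [mul_sub]
    rw [integral_sub hgf hgc, integral_mul_const, hg_zero, zero_mul, sub_zero]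
  rw [← h_shift, integral_pos_iff_support_of_nonneg h_nonneg]
  · exact h_supp
  · exact (hgf.sub hgc).congr (ae_of_all _ fun x => (mul_sub _ _ _).symm)

namespace Psi

noncomputable def psi (x : ℝ) : ℝ := (1 - x ^ 2) / (1 + x ^ 2) ^ 2

theorem hasDerivAt_div_one_add_sq (x : ℝ) :
    HasDerivAt (fun y : ℝ => y / (1 + y ^ 2)) (psi x) x := by
  have hx : 1 + x ^ 2 ≠ 0 := by positivity
  refine ((hasDerivAt_id' x).div ((hasDerivAt_pow 2 x).const_add 1) hx).congr_deriv ?_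
  rw [psi]
  field_simp
  ring

theorem tendsto_div_one_add_sq_atTop :
    Tendsto (fun x : ℝ => x / (1 + x ^ 2)) atTop (nhds 0) := by
  refine tendsto_of_tendsto_of_tendsto_of_le_of_le' tendsto_const_nhds tendsto_inv_atTop_zero ?_ ?_
  · filter_upwards [eventually_ge_atTop 0] with x hx
    positivity
  · filter_upwards [eventually_gt_atTop 0] with x hx
    rw [div_le_iff₀ (by positivity), inv_mul_eq_div, le_div_iff₀ hx]
    nlinarith

theorem tendsto_div_one_add_sq_atBot :
    Tendsto (fun x : ℝ => x / (1 + x ^ 2)) atBot (nhds 0) := by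
  have h := (tendsto_div_one_add_sq_atTop.comp tendsto_neg_atBot_atTop).neg
  simp only [neg_zero] at h
  refine h.congr fun x => ?_
  simp only [Function.comp_apply, neg_sq, neg_div, neg_neg]

theorem abs_psi_le (x : ℝ) : |psi x| ≤ (1 + x ^ 2)⁻¹ := by
  have hpos : 0 < 1 + x ^ 2 := by positivity
  have hnum : |1 - x ^ 2| ≤ 1 + x ^ 2 := abs_le.2 ⟨by nlinarith, by nlinarith⟩
  calc |psi x| = |1 - x ^ 2| / (1 + x ^ 2) ^ 2 := by rw [psi, abs_div, abs_of_pos (pow_pos hpos 2)]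
    _ ≤ (1 + x ^ 2) / (1 + x ^ 2) ^ 2 := by gcongr
    _ = (1 + x ^ 2)⁻¹ := by field_simp

theorem abs_psi_le_one (x : ℝ) : |psi x| ≤ 1 :=
  (abs_psi_le x).trans (inv_le_one_of_one_le₀ (by nlinarith))

theorem continuous_psi : Continuous psi :=
  Continuous.div (by fun_prop) (by fun_prop) fun x => by positivity

theorem integrable_psi : Integrable psi := by
  refine integrable_inv_one_add_sq.mono' continuous_psi.aestronglyMeasurable ?_
  exact ae_of_all _ fun x => abs_psi_le x

theorem integral_psi : ∫ x, psi x = 0 := by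
  simpa using integral_of_hasDerivAt_of_tendsto hasDerivAt_div_one_add_sq integrable_psi
    tendsto_div_one_add_sq_atBot tendsto_div_one_add_sq_atTop

theorem integrable_psi_mul {f : ℝ → ℝ} (hf : Integrable f) :
    Integrable (fun x => psi x * f x) :=
  hf.bdd_mul continuous_psi.aestronglyMeasurable (ae_of_all _ abs_psi_le_one)

theorem apply_abs_of_even {f : ℝ → ℝ} (hf_even : ∀ x, f (-x) = f x) (x : ℝ) :
    f |x| = f x := by
  rcases abs_choice x with h | h <;> rw [h]
  exact hf_even x

theorem psi_mul_sub_nonneg {f : ℝ → ℝ} (hf_even : ∀ x, f (-x) = f x)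
    (hf_anti : AntitoneOn f (Ici 0)) (x : ℝ) :
    0 ≤ psi x * (f x - f 1) := by
  rw [← apply_abs_of_even hf_even x]
  rcases le_total |x| 1 with hx | hx
  · have hψ : 0 ≤ psi x := div_nonneg (by nlinarith [sq_abs x, abs_nonneg x]) (by positivity)
    exact mul_nonneg hψ (sub_nonneg.2 (hf_anti (abs_nonneg x) (mem_Ici.2 zero_le_one) hx))
  · have hψ : psi x ≤ 0 :=
      div_nonpos_of_nonpos_of_nonneg (by nlinarith [sq_abs x]) (by positivity)
    exact mul_nonneg_of_nonpos_of_nonpos hψ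
      (sub_nonpos.2 (hf_anti (mem_Ici.2 zero_le_one) (zero_le_one.trans hx) hx))

theorem psi_mul_sub_pos {f : ℝ → ℝ} (hf_even : ∀ x, f (-x) = f x)
    (hf_anti : StrictAntiOn f (Ici 0)) {x : ℝ} (hx : |x| < 1) :
    0 < psi x * (f x - f 1) := by
  rw [← apply_abs_of_even hf_even x]
  have hψ : 0 < psi x := div_pos (by nlinarith [sq_abs x, abs_nonneg x]) (by positivity)
  exact mul_pos hψ (sub_pos.2 (hf_anti (abs_nonneg x) (mem_Ici.2 zero_le_one) hx))

end Psi

open Psi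

theorem psi_expectation_pos_of_decreasing_density_general
    (f : ℝ → ℝ) (hf_int : Integrable f)
    (hf_even : ∀ x, f (-x) = f x)
    (hf_anti : StrictAntiOn f (Set.Ici (0 : ℝ))) :
    0 < ∫ x : ℝ, (1 - x ^ 2) / (1 + x ^ 2) ^ 2 * f x := by
  have h_supp : Ioo (-1) 1 ⊆ Function.support fun x => psi x * (f x - f 1) :=
    fun x hx => (psi_mul_sub_pos hf_even hf_anti (abs_lt.2 hx)).ne'
  refine integral_mul_pos_of_integral_eq_zero (f 1) integrable_psi integral_psi
    (integrable_psi_mul hf_int)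
    (psi_mul_sub_nonneg hf_even hf_anti.antitoneOn) ?_
  exact (by simp : 0 < volume (Ioo (-1 : ℝ) 1)).trans_le (measure_mono h_supp)

theorem psi_expectation_pos_of_decreasing_density
    (f : ℝ → ℝ) (hf_nonneg : ∀ x, 0 ≤ f x)
    (hf_density : ∫ x : ℝ, f x = 1) (hf_int : Integrable f)
    (hf_even : ∀ x, f (-x) = f x)
    (hf_bdd : ∃ M : ℝ, ∀ x, f x ≤ M)
    (hf_cont : Continuous f)
    (hf_anti : StrictAntiOn f (Set.Ici (0 : ℝ)))
    (hf1 : 0 < f 1) :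
    0 < ∫ x : ℝ, (1 - x ^ 2) / (1 + x ^ 2) ^ 2 * f x :=
  psi_expectation_pos_of_decreasing_density_general f hf_int hf_even hf_anti
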